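/- If ω is a graded symplectic structure on M(n|m), then the map M ↦ D_M from M(n|m) to graded derivations is a Lie superalgebra homomorphism (with respect to the graded Poisson bracket and the graded commutator of derivations), its kernel is ℂ·1_{n+m}, and every graded derivation of M(n|m) is Hamiltonian. -/

import Mathlib

noncomputable section

/-- The `ℤ₂`-graded algebra `M(n|m)` of complex `(n+m)×(n+m)` matrices. -/
abbrev GMat (n m : ℕ) := Matrix (Fin (n + m)) (Fin (n + m)) ℂ

/-- The "body" matrix algebra `M_{max n m}(ℂ)`. -/
abbrev BMat (n m : ℕ) := Matrix (Fin (max n m)) (Fin (max n m)) ℂ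

namespace GMat

/-- Block degree of an index: `false` for the first (size `n`) block. -/
def bdeg (n m : ℕ) (i : Fin (n + m)) : Bool := decide (n ≤ i.val)

/-- `M` is homogeneous of degree `ε` (block-diagonal for `ε = false`,
block-off-diagonal for `ε = true`). -/
def IsHomog (n m : ℕ) (ε : Bool) (M : GMat n m) : Prop :=
  ∀ i j, Bool.xor (bdeg n m i) (bdeg n m j) ≠ ε → M i j = 0

/-- The Koszul sign `(-1)^{ab}`. -/
def sgn (a b : Bool) : ℂ := if a && b then -1 else 1

/-- Graded commutator of homogeneous elements of degrees `a`, `b`. -/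
def gcomm {n m : ℕ} (a b : Bool) (A B : GMat n m) : GMat n m := A * B - sgn a b • (B * A)

/-- Graded anticommutator of homogeneous elements of degrees `a`, `b`. -/
def gacomm {n m : ℕ} (a b : Bool) (A B : GMat n m) : GMat n m := A * B + sgn a b • (B * A)

/-- The grading matrix `Γ = diag(1_n, -1_m)`. -/
def Gamma (n m : ℕ) : GMat n m := Matrix.diagonal fun i => if bdeg n m i then -1 else 1

/-- `D` is a graded derivation of `M(n|m)` of degree `ε`. -/
def IsGDer (n m : ℕ) (ε : Bool) (D : GMat n m → GMat n m) : Prop :=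
  (∀ A B, D (A + B) = D A + D B) ∧
  (∀ (c : ℂ) A, D (c • A) = c • D A) ∧
  (∀ (a : Bool) M, IsHomog n m a M → IsHomog n m (Bool.xor a ε) (D M)) ∧
  (∀ (a : Bool) (M M' : GMat n m), IsHomog n m a M →
    D (M * M') = D M * M' + sgn ε a • (M * D M'))

/-- The graded adjoint action `ad E` of a homogeneous matrix `E` of degree `a`:
on homogeneous `M` it is the graded commutator `[E,M]_g`. -/
def gad (n m : ℕ) (a : Bool) (E : GMat n m) : GMat n m → GMat n m :=
  fun M => E * M - (if a then Gamma n m * M * Gamma n m * E else M * E)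

/-- The supertrace `str M = Tr M₁ - Tr M₄`. -/
def str (n m : ℕ) (M : GMat n m) : ℂ :=
  ∑ i, (if bdeg n m i then (-1 : ℂ) else 1) * M i i

end GMat

/-!
Every graded derivation of `M(n|m)` is inner, `D = ad E` with `E` homogeneous in `sl(n|m)`: an
ungraded derivation of a matrix algebra is a commutator (twist an odd one by `Γ` first), and the
component of `E` of the wrong degree must act trivially. For `n ≠ m` the graded centre of
`sl(n|m)` is trivial, since a graded-central matrix is scalar and `str 1 = n - m ≠ 0`.

Closedness of `ω`, evaluated on `(ad E, D_M, D_{M'})`, shows that `[D_M, D_{M'}]` solves the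
equation defining `D_{{M,M'}}`, so uniqueness gives the homomorphism property. `D_M = 0` means
`ad E M = 0` for all `E ∈ sl(n|m)`, i.e. `M` is scalar. Finally `M ↦ D_M` is an injective linear
endomorphism of each homogeneous component of `sl(n|m)`, hence onto.
-/

theorem Matrix.exists_eq_mul_sub_mul_of_leibniz_single {ι R : Type*} [Fintype ι] [DecidableEq ι]
    [CommRing R] (D : Matrix ι ι R →ₗ[R] Matrix ι ι R)
    (hD : ∀ i j (c : R) Y, D (single i j c * Y) = D (single i j c) * Y + single i j c * D Y) :
    ∃ A, ∀ X, D X = A * X - X * A := by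
  rcases isEmpty_or_nonempty ι with _ | ⟨⟨z⟩⟩
  · exact ⟨0, fun X => Subsingleton.elim _ _⟩
  refine ⟨∑ i, D (single i z 1) * single z i 1, fun X => X.induction_on' (by simp) ?_ ?_⟩
  · intro X Y hX hY
    rw [map_add, hX, hY]
    noncomm_ring
  intro p q c
  have hD_smul : D (single p z c) = c • D (single p z 1) := by
    rw [← map_smul, smul_single, smul_eq_mul, mul_one]
  have h_right : (∑ i, D (single i z 1) * single z i 1) * single p q c =
      D (single p z c) * single z q 1 := by
    rw [Finset.sum_mul, Finset.sum_eq_single p (fun i _ hip => by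
      rw [mul_assoc, single_mul_single_of_ne _ _ _ _ hip, mul_zero]) (by simp)]
    rw [mul_assoc, single_mul_single_same, hD_smul, smul_mul_assoc, ← mul_smul_comm, smul_single]
    simp
  have h_left : single p q c * (∑ i, D (single i z 1) * single z i 1) =
      D (single p z c) * single z q 1 - D (single p q c) := by
    have hterm : ∀ i, single p q c * (D (single i z 1) * single z i 1) =
        D (single p q c * single i z 1) * single z i 1 -
          D (single p q c) * single i i 1 := fun i => by
      rw [← mul_assoc, eq_sub_of_add_eq' (hD p q c (single i z 1)).symm, sub_mul, mul_assoc,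
        single_mul_single_same, one_mul]
    rw [Finset.mul_sum, Finset.sum_congr rfl fun i _ => hterm i, Finset.sum_sub_distrib,
      ← Finset.mul_sum, sum_single_one, mul_one, Finset.sum_eq_single q (fun i _ hiq => by
        rw [single_mul_single_of_ne _ _ _ _ (Ne.symm hiq), map_zero, zero_mul]) (by simp),
      single_mul_single_same, mul_one]
  rw [h_right, h_left]
  abel

namespace GMat

variable {n m : ℕ}

lemma sgn_comm (a b : Bool) : sgn a b = sgn b a := by cases a <;> cases b <;> rfl

lemma sgn_mul_self (a b : Bool) : sgn a b * sgn a b = 1 := by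
  cases a <;> cases b <;> norm_num [sgn]

namespace IsHomog

variable {a b : Bool} {A B : GMat n m}

lemma zero (a : Bool) : IsHomog n m a (0 : GMat n m) := fun _ _ _ => rfl

lemma add (hA : IsHomog n m a A) (hB : IsHomog n m a B) : IsHomog n m a (A + B) := by
  intro i j hij; simp [hA i j hij, hB i j hij]

lemma smul (k : ℂ) (hA : IsHomog n m a A) : IsHomog n m a (k • A) := by
  intro i j hij; simp [hA i j hij]

lemma sub (hA : IsHomog n m a A) (hB : IsHomog n m a B) : IsHomog n m a (A - B) := by
  intro i j hij; simp [hA i j hij, hB i j hij]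

lemma mul (hA : IsHomog n m a A) (hB : IsHomog n m b B) : IsHomog n m (a ^^ b) (A * B) := by
  intro i j hij
  rw [Matrix.mul_apply]
  refine Finset.sum_eq_zero fun k _ => ?_
  by_cases hik : (bdeg n m i ^^ bdeg n m k) = a
  · rw [hB k j fun hkj => hij (by rw [← hik, ← hkj]; cases bdeg n m k <;> simp), mul_zero]
  · rw [hA i k hik, zero_mul]

lemma gcomm (hA : IsHomog n m a A) (hB : IsHomog n m b B) :
    IsHomog n m (a ^^ b) (GMat.gcomm a b A B) :=
  (hA.mul hB).sub ((Bool.xor_comm a b ▸ hB.mul hA).smul _)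

lemma eq_zero_of_ne (hab : a ≠ b) (hA : IsHomog n m a A) (hB : IsHomog n m b A) : A = 0 := by
  ext i j
  by_cases hd : (bdeg n m i ^^ bdeg n m j) = a
  · exact hB i j (hd ▸ hab)
  · exact hA i j hd

end IsHomog

lemma isHomog_one : IsHomog n m false (1 : GMat n m) := by
  intro i j hij
  exact Matrix.one_apply_ne fun h => hij (by simp [h])

lemma isHomog_single (i j : Fin (n + m)) (c : ℂ) :
    IsHomog n m (bdeg n m i ^^ bdeg n m j) (Matrix.single i j c) := by
  intro k l hkl
  rw [Matrix.single_apply_of_ne]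
  rintro ⟨rfl, rfl⟩
  exact hkl rfl

/-- The parity automorphism `X ↦ Γ X Γ`, applied `a` times. -/
def par (a : Bool) (X : GMat n m) : GMat n m := if a then Gamma n m * X * Gamma n m else X

lemma Gamma_mul_Gamma : Gamma n m * Gamma n m = 1 := by
  rw [Gamma, Matrix.diagonal_mul_diagonal, ← Matrix.diagonal_one]
  congr 1; funext i; split_ifs <;> norm_num

lemma gad_eq_par (a : Bool) (E X : GMat n m) : gad n m a E X = E * X - par a X * E := by
  cases a <;> rfl

lemma par_add (a : Bool) (X Y : GMat n m) : par a (X + Y) = par a X + par a Y := by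
  cases a <;> simp [par, mul_add, add_mul]

lemma par_smul (a : Bool) (k : ℂ) (X : GMat n m) : par a (k • X) = k • par a X := by
  cases a <;> simp [par]

lemma par_sub (a : Bool) (X Y : GMat n m) : par a (X - Y) = par a X - par a Y := by
  cases a <;> simp [par, mul_sub, sub_mul]

lemma par_mul (a : Bool) (X Y : GMat n m) : par a (X * Y) = par a X * par a Y := by
  cases a
  · rfl
  · simp only [par, if_true, mul_assoc, ← mul_assoc (Gamma n m) (Gamma n m), Gamma_mul_Gamma,
      one_mul]

lemma par_par (a b : Bool) (X : GMat n m) : par a (par b X) = par (a ^^ b) X := by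
  cases a <;> cases b <;> simp [par, mul_assoc, ← mul_assoc (Gamma n m) (Gamma n m),
    Gamma_mul_Gamma]

lemma par_true_apply (M : GMat n m) (i j : Fin (n + m)) :
    par true M i j = sgn true (bdeg n m i ^^ bdeg n m j) * M i j := by
  simp only [par, if_true, Gamma, Matrix.mul_diagonal, Matrix.diagonal_mul]
  cases bdeg n m i <;> cases bdeg n m j <;> simp [sgn]

lemma par_of_isHomog {b : Bool} {X : GMat n m} (hX : IsHomog n m b X) (a : Bool) :
    par a X = sgn a b • X := by
  cases a
  · simp [par, sgn]
  ext i j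
  rw [par_true_apply, Matrix.smul_apply, smul_eq_mul]
  by_cases hd : (bdeg n m i ^^ bdeg n m j) = b
  · rw [hd]
  · simp [hX i j hd]

lemma Gamma_mul_of_isHomog {a : Bool} {E : GMat n m} (hE : IsHomog n m a E) :
    Gamma n m * E = sgn true a • (E * Gamma n m) := by
  have h := par_of_isHomog hE true
  simp only [par, if_true] at h
  rw [← smul_mul_assoc, ← h, mul_assoc, Gamma_mul_Gamma, mul_one]

lemma gad_of_isHomog {x : Bool} {X : GMat n m} (hX : IsHomog n m x X) (a : Bool) (E : GMat n m) :
    gad n m a E X = E * X - sgn a x • (X * E) := by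
  rw [gad_eq_par, par_of_isHomog hX, smul_mul_assoc]

lemma gad_add_left (a : Bool) (E F X : GMat n m) :
    gad n m a (E + F) X = gad n m a E X + gad n m a F X := by
  simp only [gad_eq_par, add_mul, mul_add]; abel

lemma gad_add_right (a : Bool) (E X Y : GMat n m) :
    gad n m a E (X + Y) = gad n m a E X + gad n m a E Y := by
  simp only [gad_eq_par, par_add, add_mul, mul_add]; abel

lemma gad_smul_right (a : Bool) (k : ℂ) (E X : GMat n m) :
    gad n m a E (k • X) = k • gad n m a E X := by
  simp only [gad_eq_par, par_smul, smul_mul_assoc, mul_smul_comm, smul_sub]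

lemma IsHomog.gad {a x : Bool} {E X : GMat n m} (hE : IsHomog n m a E) (hX : IsHomog n m x X)
    (b : Bool) : IsHomog n m (a ^^ x) (gad n m b E X) := by
  rw [gad_of_isHomog hX]
  exact (hE.mul hX).sub ((Bool.xor_comm x a ▸ hX.mul hE).smul _)

lemma gad_gcomm {a b : Bool} {E F : GMat n m} (hE : IsHomog n m a E) (hF : IsHomog n m b F)
    (X : GMat n m) :
    gad n m (a ^^ b) (gcomm a b E F) X =
      gad n m a E (gad n m b F X) - sgn a b • gad n m b F (gad n m a E X) := by
  simp only [gad_eq_par, gcomm, par_sub, par_mul, par_par, par_of_isHomog hE,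
    par_of_isHomog hF, Bool.xor_comm b a, sgn_comm b a]
  simp only [mul_sub, sub_mul, smul_mul_assoc, mul_smul_comm, mul_assoc, smul_sub, smul_smul]
  linear_combination (norm := module)
    (sgn_mul_self a b) • (par (a ^^ b) X * (E * F) - E * (par b X * F))

lemma gad_swap {a c : Bool} {E N : GMat n m} (hE : IsHomog n m a E) (hN : IsHomog n m c N) :
    gad n m a E N = -(sgn a c • gad n m c N E) := by
  rw [gad_of_isHomog hN, gad_of_isHomog hE, sgn_comm c a]
  linear_combination (norm := module) (sgn_mul_self a c) • (-(E * N))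

lemma gad_smul_one_right (a : Bool) (E : GMat n m) (k : ℂ) : gad n m a E (k • 1) = 0 := by
  rw [gad_of_isHomog (isHomog_one.smul k)]
  cases a <;> simp [sgn]

lemma gad_false_smul_one_left (k : ℂ) (X : GMat n m) : gad n m false (k • 1) X = 0 := by
  simp [gad]

def homogPart (a : Bool) (M : GMat n m) : GMat n m :=
  (2 : ℂ)⁻¹ • (M + sgn a true • par true M)

lemma isHomog_homogPart (a : Bool) (M : GMat n m) : IsHomog n m a (homogPart a M) := by
  intro i j hij
  simp only [homogPart, Matrix.smul_apply, Matrix.add_apply, par_true_apply, smul_eq_mul]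
  cases a <;> cases h : (bdeg n m i ^^ bdeg n m j) <;> simp_all [sgn]

lemma homogPart_add_homogPart_not (a : Bool) (M : GMat n m) :
    homogPart a M + homogPart (!a) M = M := by
  cases a <;> simp only [homogPart, sgn, Bool.not_false, Bool.not_true] <;> norm_num <;> module

lemma str_add (A B : GMat n m) : str n m (A + B) = str n m A + str n m B := by
  simp [str, mul_add, Finset.sum_add_distrib]

lemma str_smul (k : ℂ) (A : GMat n m) : str n m (k • A) = k * str n m A := by
  simp [str, Finset.mul_sum, mul_left_comm]

lemma str_sub (A B : GMat n m) : str n m (A - B) = str n m A - str n m B := by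
  simp [str, mul_sub, Finset.sum_sub_distrib]

lemma str_one : str n m (1 : GMat n m) = n - m := by
  rw [str, Fin.sum_univ_add]
  simp [bdeg, sub_eq_add_neg, fun i : Fin n => not_le.mpr i.isLt]

lemma str_one_ne_zero (hnm : n ≠ m) : str n m (1 : GMat n m) ≠ 0 := by
  rw [str_one, sub_ne_zero]
  exact_mod_cast hnm

lemma str_eq_zero_of_isHomog_true {M : GMat n m} (hM : IsHomog n m true M) : str n m M = 0 :=
  Finset.sum_eq_zero fun i _ => by rw [hM i i (by simp), mul_zero]

lemma str_mul_comm {a b : Bool} {A B : GMat n m} (hA : IsHomog n m a A) (hB : IsHomog n m b B) :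
    str n m (A * B) = sgn a b * str n m (B * A) := by
  simp only [str, Matrix.mul_apply, Finset.mul_sum]
  rw [Finset.sum_comm]
  refine Finset.sum_congr rfl fun k _ => Finset.sum_congr rfl fun i _ => ?_
  by_cases hik : (bdeg n m i ^^ bdeg n m k) = a
  · by_cases hki : (bdeg n m k ^^ bdeg n m i) = b
    · subst hik hki
      cases bdeg n m i <;> cases bdeg n m k <;> simp [sgn] <;> ring
    · simp [hB k i hki]
  · simp [hA i k hik]

lemma str_gcomm {a b : Bool} {A B : GMat n m} (hA : IsHomog n m a A) (hB : IsHomog n m b B) :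
    str n m (gcomm a b A B) = 0 := by
  rw [gcomm, str_sub, str_smul, str_mul_comm hA hB, sub_self]

lemma str_single_of_ne {i j : Fin (n + m)} (hij : i ≠ j) (c : ℂ) :
    str n m (Matrix.single i j c) = 0 :=
  Finset.sum_eq_zero fun k _ => by
    have hk : ¬(i = k ∧ j = k) := fun hk => hij (hk.1.trans hk.2.symm)
    simp [hk]

lemma exists_eq_smul_one_of_forall_gad_eq_zero {c : Bool} {M : GMat n m} (hM : IsHomog n m c M)
    (hz : ∀ (a : Bool) (E : GMat n m), str n m E = 0 → IsHomog n m a E → gad n m a E M = 0) :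
    ∃ k : ℂ, M = k • (1 : GMat n m) := by
  rcases isEmpty_or_nonempty (Fin (n + m)) with _ | ⟨⟨z⟩⟩
  · exact ⟨0, Subsingleton.elim _ _⟩
  have hcomm : ∀ i j, i ≠ j → Matrix.single i j 1 * M =
      sgn (bdeg n m i ^^ bdeg n m j) c • (M * Matrix.single i j 1) := fun i j hij =>
    sub_eq_zero.mp <| (gad_of_isHomog hM _ _).symm.trans <|
      hz _ _ (str_single_of_ne hij 1) (isHomog_single i j 1)
  have hoff : ∀ j l, j ≠ l → M j l = 0 := fun j l hjl => by
    simpa [Matrix.mul_single_apply_of_ne (hbj := hjl.symm)] using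
      congrFun₂ (hcomm l j hjl.symm) l l
  have hdiag : ∀ j, M j j = M z z := fun j => by
    by_cases hjz : j = z
    · rw [hjz]
    have h := congrFun₂ (hcomm z j (Ne.symm hjz)) z j
    simp only [Matrix.single_mul_apply_same, Matrix.smul_apply, Matrix.mul_single_apply_same,
      one_mul, mul_one, smul_eq_mul] at h
    cases c
    · simpa [sgn] using h
    · rw [hM j j (by simp), hM z z (by simp)]
  refine ⟨M z z, Matrix.ext fun i j => ?_⟩
  by_cases hij : i = j
  · simp [hij, hdiag]
  · simp [hij, hoff i j hij]

lemma eq_zero_of_forall_gad_eq_zero (hnm : n ≠ m) {c : Bool} {M : GMat n m}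
    (hM : IsHomog n m c M) (hstr : str n m M = 0)
    (hz : ∀ (a : Bool) (E : GMat n m), str n m E = 0 → IsHomog n m a E → gad n m a E M = 0) :
    M = 0 := by
  obtain ⟨k, rfl⟩ := exists_eq_smul_one_of_forall_gad_eq_zero hM hz
  rw [str_smul] at hstr
  rw [(mul_eq_zero.mp hstr).resolve_right (str_one_ne_zero hnm), zero_smul]

lemma forall_gad_eq_zero_iff (hnm : n ≠ m) {c : Bool} {N : GMat n m} (hN : IsHomog n m c N)
    (hstr : str n m N = 0) : (∀ X, gad n m c N X = 0) ↔ N = 0 := by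
  refine ⟨fun h0 => eq_zero_of_forall_gad_eq_zero hnm hN hstr fun a E _ hE => ?_, ?_⟩
  · rw [gad_swap hE hN, h0, smul_zero, neg_zero]
  · rintro rfl X
    simp [gad]

lemma IsGDer.exists_gad {ε : Bool} {D : GMat n m → GMat n m} (hD : IsGDer n m ε D) :
    ∃ B, ∀ X, D X = gad n m ε B X := by
  obtain ⟨hadd, hsmul, -, hleib⟩ := hD
  let L : GMat n m →ₗ[ℂ] GMat n m := ⟨⟨D, hadd⟩, hsmul⟩
  cases ε
  · refine Matrix.exists_eq_mul_sub_mul_of_leibniz_single L fun i j c Y => ?_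
    simpa [L, sgn] using hleib _ _ Y (isHomog_single i j c)
  -- for odd `D`, left multiplication by `Γ` absorbs the Koszul sign of the Leibniz rule
  obtain ⟨A, hA⟩ := Matrix.exists_eq_mul_sub_mul_of_leibniz_single
    (LinearMap.mulLeft ℂ (Gamma n m) ∘ₗ L) fun i j c Y => by
      have hs := isHomog_single (n := n) (m := m) i j c
      simp only [LinearMap.comp_apply, LinearMap.mulLeft_apply, L, LinearMap.coe_mk,
        AddHom.coe_mk, hleib _ _ Y hs, mul_add, mul_smul_comm, ← mul_assoc,
        Gamma_mul_of_isHomog hs, smul_mul_assoc, smul_smul, sgn_mul_self, one_smul]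
  refine ⟨Gamma n m * A, fun X => ?_⟩
  calc D X = Gamma n m * (Gamma n m * D X) := by rw [← mul_assoc, Gamma_mul_Gamma, one_mul]
    _ = Gamma n m * (A * X - X * A) := congrArg _ (hA X)
    _ = gad n m true (Gamma n m * A) X := by
      simp only [gad, if_true, mul_sub, mul_assoc, ← mul_assoc (Gamma n m) (Gamma n m),
        Gamma_mul_Gamma, one_mul]

lemma gad_eq_gad_homogPart {ε : Bool} {B : GMat n m}
    (hB : ∀ x X, IsHomog n m x X → IsHomog n m (x ^^ ε) (gad n m ε B X)) (X : GMat n m) :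
    gad n m ε B X = gad n m ε (homogPart ε B) X := by
  have hsplit : ∀ X, gad n m ε B X =
      gad n m ε (homogPart ε B) X + gad n m ε (homogPart (!ε) B) X := fun X => by
    rw [← gad_add_left, homogPart_add_homogPart_not]
  -- the wrong-degree component shifts degrees by `!ε`, but must shift them by `ε`
  have hwrong : ∀ x X, IsHomog n m x X → gad n m ε (homogPart (!ε) B) X = 0 := by
    intro x X hX
    have h1 := (isHomog_homogPart (!ε) B).gad hX ε
    have h2 : IsHomog n m (x ^^ ε) (gad n m ε (homogPart (!ε) B) X) := by
      rw [eq_sub_of_add_eq' (hsplit X).symm, Bool.xor_comm x ε]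
      exact (Bool.xor_comm x ε ▸ hB x X hX).sub ((isHomog_homogPart ε B).gad hX ε)
    exact h1.eq_zero_of_ne (by cases x <;> cases ε <;> decide) h2
  have hwrong_X : gad n m ε (homogPart (!ε) B) X = 0 := by
    rw [← homogPart_add_homogPart_not false X, gad_add_right,
      hwrong _ _ (isHomog_homogPart _ _), hwrong _ _ (isHomog_homogPart _ _), add_zero]
  rw [hsplit, hwrong_X, add_zero]

lemma IsGDer.exists_isHomog_gad (hnm : n ≠ m) {ε : Bool} {D : GMat n m → GMat n m}
    (hD : IsGDer n m ε D) :
    ∃ E, IsHomog n m ε E ∧ str n m E = 0 ∧ ∀ X, D X = gad n m ε E X := by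
  obtain ⟨B, hB⟩ := hD.exists_gad
  have hDP : ∀ X, D X = gad n m ε (homogPart ε B) X := fun X =>
    (hB X).trans <| gad_eq_gad_homogPart (fun x X hX => hB X ▸ hD.2.2.1 x X hX) X
  cases ε
  · refine ⟨homogPart false B - (str n m (homogPart false B) / str n m 1) • 1,
      (isHomog_homogPart _ _).sub (isHomog_one.smul _), ?_, fun X => ?_⟩
    · rw [str_sub, str_smul, div_mul_cancel₀ _ (str_one_ne_zero hnm), sub_self]
    · rw [hDP, sub_eq_add_neg, gad_add_left, ← neg_smul, gad_false_smul_one_left, add_zero]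
  · exact ⟨_, isHomog_homogPart _ _, str_eq_zero_of_isHomog_true (isHomog_homogPart _ _), hDP⟩

/-- `ω a E b F` stands for `ω(ad E, ad F)` on homogeneous `E, F ∈ sl(n|m)` of degrees `a, b`. -/
structure IsClosedGradedTwoForm (ω : Bool → GMat n m → Bool → GMat n m → GMat n m) :
    Prop where
  linear_right : ∀ (a : Bool) (E : GMat n m) (b : Bool), IsLinearMap ℂ (ω a E b)
  alternating : ∀ (a : Bool) (E : GMat n m) (b : Bool) (F : GMat n m),
    ω b F a E = -(sgn a b) • ω a E b F
  even : ∀ (a : Bool) (E : GMat n m) (b : Bool) (F : GMat n m),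
    str n m E = 0 → str n m F = 0 → IsHomog n m a E → IsHomog n m b F →
    IsHomog n m (a ^^ b) (ω a E b F)
  closed : ∀ (a b c : Bool) (E F G : GMat n m),
    str n m E = 0 → str n m F = 0 → str n m G = 0 →
    IsHomog n m a E → IsHomog n m b F → IsHomog n m c G →
    gad n m a E (ω b F c G) - sgn a b • gad n m b F (ω a E c G) +
      (sgn a c * sgn b c) • gad n m c G (ω a E b F) -
      ω (a ^^ b) (gcomm a b E F) c G +
      sgn b c • ω (a ^^ c) (gcomm a c E G) b F +
      ω a E (b ^^ c) (gcomm b c F G) = 0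

/-- `ad N` is the Hamiltonian vector field `D_M` of `M`: it solves `ω(D, ad N) = D M`. -/
structure IsHamiltonianField (ω : Bool → GMat n m → Bool → GMat n m → GMat n m) (c : Bool)
    (M N : GMat n m) : Prop where
  str_eq_zero : str n m N = 0
  isHomog : IsHomog n m c N
  apply_eq_gad : ∀ (a : Bool) (E : GMat n m), str n m E = 0 → IsHomog n m a E →
    ω a E c N = gad n m a E M

namespace IsHamiltonianField

variable {ω : Bool → GMat n m → Bool → GMat n m → GMat n m} {c : Bool}
  {M M' N N' : GMat n m}

lemma add (hω : ∀ a E b, IsLinearMap ℂ (ω a E b)) (hN : IsHamiltonianField ω c M N)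
    (hN' : IsHamiltonianField ω c M' N') : IsHamiltonianField ω c (M + M') (N + N') where
  str_eq_zero := by rw [str_add, hN.str_eq_zero, hN'.str_eq_zero, add_zero]
  isHomog := hN.isHomog.add hN'.isHomog
  apply_eq_gad a E hE hEa := by
    rw [(hω a E c).map_add, hN.apply_eq_gad a E hE hEa, hN'.apply_eq_gad a E hE hEa,
      gad_add_right]

lemma smul (hω : ∀ a E b, IsLinearMap ℂ (ω a E b)) (k : ℂ)
    (hN : IsHamiltonianField ω c M N) :
    IsHamiltonianField ω c (k • M) (k • N) where
  str_eq_zero := by rw [str_smul, hN.str_eq_zero, mul_zero]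
  isHomog := hN.isHomog.smul k
  apply_eq_gad a E hE hEa := by
    rw [(hω a E c).map_smul, hN.apply_eq_gad a E hE hEa, gad_smul_right]

lemma zero_iff (hω : ∀ a E b, IsLinearMap ℂ (ω a E b)) :
    IsHamiltonianField ω c M 0 ↔
      ∀ (a : Bool) (E : GMat n m), str n m E = 0 → IsHomog n m a E → gad n m a E M = 0 := by
  refine ⟨fun h0 a E hE hEa => ?_,
    fun h0 => ⟨by simp [str], IsHomog.zero c, fun a E hE hEa => ?_⟩⟩
  · rw [← h0.apply_eq_gad a E hE hEa, (hω a E c).map_zero]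
  · rw [(hω a E c).map_zero, h0 a E hE hEa]

/-- The Poisson bracket `ω(D_M, D_{M'})` has Hamiltonian field `[D_M, D_{M'}]`: this is
closedness of `ω` evaluated on `(ad E, D_M, D_{M'})`. -/
lemma gcomm {c' : Bool} (hω : IsClosedGradedTwoForm ω) (hF : IsHamiltonianField ω c M N)
    (hG : IsHamiltonianField ω c' M' N') :
    IsHamiltonianField ω (c ^^ c') (ω c N c' N') (GMat.gcomm c c' N N') where
  str_eq_zero := str_gcomm hF.isHomog hG.isHomog
  isHomog := hF.isHomog.gcomm hG.isHomog
  apply_eq_gad a E hE hEa := by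
    have hclosed := hω.closed a c c' E N N' hE hF.str_eq_zero hG.str_eq_zero hEa hF.isHomog
      hG.isHomog
    have hGF : gad n m c' N' M = -sgn c c' • ω c N c' N' := by
      rw [← hF.apply_eq_gad c' N' hG.str_eq_zero hG.isHomog, hω.alternating]
    rw [hG.apply_eq_gad a E hE hEa, hF.apply_eq_gad a E hE hEa,
      hG.apply_eq_gad _ _ (str_gcomm hEa hF.isHomog) (hEa.gcomm hF.isHomog),
      hF.apply_eq_gad _ _ (str_gcomm hEa hG.isHomog) (hEa.gcomm hG.isHomog),
      gad_gcomm hEa hF.isHomog, gad_gcomm hEa hG.isHomog, hGF, gad_smul_right,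
      ← hG.apply_eq_gad c N hF.str_eq_zero hF.isHomog] at hclosed
    linear_combination (norm := module)
      hclosed + (sgn_mul_self c c') • gad n m a E (ω c N c' N')

end IsHamiltonianField

def slPart (n m : ℕ) (ε : Bool) : Submodule ℂ (GMat n m) where
  carrier := {E | IsHomog n m ε E ∧ str n m E = 0}
  add_mem' hE hF := ⟨hE.1.add hF.1, by rw [str_add, hE.2, hF.2, add_zero]⟩
  zero_mem' := ⟨IsHomog.zero ε, by simp [str]⟩
  smul_mem' k _ hE := ⟨hE.1.smul k, by rw [str_smul, hE.2, mul_zero]⟩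

/-- By uniqueness `M ↦ D_M` is linear on `sl(n|m)_ε`, and injective because the graded centre is
trivial; by finite dimension it is onto. -/
lemma exists_isHomog_eq_of_isHamiltonianField (hnm : n ≠ m)
    {ω : Bool → GMat n m → Bool → GMat n m → GMat n m}
    (hω : ∀ a E b, IsLinearMap ℂ (ω a E b))
    {ε : Bool} (f : GMat n m → GMat n m)
    (hf : ∀ M, IsHomog n m ε M → IsHamiltonianField ω ε M (f M))
    (hf_unique : ∀ M N, IsHomog n m ε M → IsHamiltonianField ω ε M N → N = f M)
    {E : GMat n m} (hE : IsHomog n m ε E) (hstr : str n m E = 0) :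
    ∃ M, IsHomog n m ε M ∧ f M = E := by
  let φ : slPart n m ε →ₗ[ℂ] slPart n m ε :=
    { toFun M := ⟨f M, (hf M M.2.1).isHomog, (hf M M.2.1).str_eq_zero⟩
      map_add' M M' := Subtype.ext <| (hf_unique _ _ (M.2.1.add M'.2.1)
        ((hf M M.2.1).add hω (hf M' M'.2.1))).symm
      map_smul' k M := Subtype.ext <| (hf_unique _ _ (M.2.1.smul k)
        ((hf M M.2.1).smul hω k)).symm }
  have hφ : Function.Injective φ := by
    rw [injective_iff_map_eq_zero]
    rintro ⟨M, hM, hMstr⟩ h0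
    have hfM : f M = 0 := congrArg Subtype.val h0
    have hM0 : IsHamiltonianField ω ε M 0 := hfM ▸ hf M hM
    exact Subtype.ext <| eq_zero_of_forall_gad_eq_zero hnm hM hMstr <|
      (IsHamiltonianField.zero_iff hω).mp hM0
  obtain ⟨⟨M, hM, _⟩, hfM⟩ := LinearMap.injective_iff_surjective.mp hφ ⟨E, hE, hstr⟩
  exact ⟨M, hM, congrArg Subtype.val hfM⟩

end GMat

theorem symplectic_hamiltonian_map_general (n m : ℕ) (hnm : n ≠ m)
    (ω : Bool → GMat n m → Bool → GMat n m → GMat n m)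
    (hadd2 : ∀ (a : Bool) (E : GMat n m) (b : Bool) (F F' : GMat n m),
      ω a E b (F + F') = ω a E b F + ω a E b F')
    (hsmul2 : ∀ (k : ℂ) (a : Bool) (E : GMat n m) (b : Bool) (F : GMat n m),
      ω a E b (k • F) = k • ω a E b F)
    (halt : ∀ (a : Bool) (E : GMat n m) (b : Bool) (F : GMat n m),
      ω b F a E = -(GMat.sgn a b) • ω a E b F)
    (heven : ∀ (a : Bool) (E : GMat n m) (b : Bool) (F : GMat n m),
      GMat.str n m E = 0 → GMat.str n m F = 0 →
      GMat.IsHomog n m a E → GMat.IsHomog n m b F →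
      GMat.IsHomog n m (Bool.xor a b) (ω a E b F))
    (hclosed : ∀ (a b c : Bool) (E F G : GMat n m),
      GMat.str n m E = 0 → GMat.str n m F = 0 → GMat.str n m G = 0 →
      GMat.IsHomog n m a E → GMat.IsHomog n m b F → GMat.IsHomog n m c G →
      GMat.gad n m a E (ω b F c G) - GMat.sgn a b • GMat.gad n m b F (ω a E c G) +
        (GMat.sgn a c * GMat.sgn b c) • GMat.gad n m c G (ω a E b F) -
        ω (Bool.xor a b) (GMat.gcomm a b E F) c G +
        GMat.sgn b c • ω (Bool.xor a c) (GMat.gcomm a c E G) b F +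
        ω a E (Bool.xor b c) (GMat.gcomm b c F G) = 0)
    (h : Bool → GMat n m → GMat n m)
    (hHam : ∀ (c : Bool) (M : GMat n m), GMat.IsHomog n m c M →
      GMat.str n m (h c M) = 0 ∧ GMat.IsHomog n m c (h c M) ∧
      ∀ (a : Bool) (E : GMat n m), GMat.str n m E = 0 → GMat.IsHomog n m a E →
        ω a E c (h c M) = GMat.gad n m a E M)
    (hUniq : ∀ (c : Bool) (M : GMat n m), GMat.IsHomog n m c M →
      ∀ N : GMat n m, GMat.str n m N = 0 → GMat.IsHomog n m c N →
        (∀ (a : Bool) (E : GMat n m), GMat.str n m E = 0 →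
          GMat.IsHomog n m a E → ω a E c N = GMat.gad n m a E M) →
        N = h c M) :
    (∀ (c c' : Bool) (M M' : GMat n m), GMat.IsHomog n m c M →
      GMat.IsHomog n m c' M' → ∀ X : GMat n m,
      GMat.gad n m (Bool.xor c c')
          (h (Bool.xor c c') (ω c (h c M) c' (h c' M'))) X =
        GMat.gad n m c (h c M) (GMat.gad n m c' (h c' M') X) -
          GMat.sgn c c' • GMat.gad n m c' (h c' M') (GMat.gad n m c (h c M) X)) ∧
    (∀ (c : Bool) (M : GMat n m), GMat.IsHomog n m c M →
      ((∀ X : GMat n m, GMat.gad n m c (h c M) X = 0) ↔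
        ∃ k : ℂ, M = k • (1 : GMat n m))) ∧
    (∀ (ε : Bool) (D : GMat n m → GMat n m), GMat.IsGDer n m ε D →
      ∃ M : GMat n m, GMat.IsHomog n m ε M ∧
        ∀ X : GMat n m, D X = GMat.gad n m ε (h ε M) X) := by
  open GMat in
  have hω : IsClosedGradedTwoForm ω :=
    ⟨fun a E b => ⟨hadd2 a E b, fun k F => hsmul2 k a E b F⟩, halt, heven, hclosed⟩
  have hD : ∀ c M, IsHomog n m c M → IsHamiltonianField ω c M (h c M) := fun c M hM =>
    ⟨(hHam c M hM).1, (hHam c M hM).2.1, (hHam c M hM).2.2⟩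
  have hD_unique : ∀ c M N, IsHomog n m c M → IsHamiltonianField ω c M N → N = h c M :=
    fun c M N hM hN => hUniq c M hM N hN.str_eq_zero hN.isHomog hN.apply_eq_gad
  refine ⟨fun c c' M M' hM hM' X => ?_, fun c M hM => ?_, fun ε D hDer => ?_⟩
  · have hF := hD c M hM
    have hG := hD c' M' hM'
    rw [← hD_unique _ _ _ (hω.even _ _ _ _ hF.str_eq_zero hG.str_eq_zero hF.isHomog hG.isHomog)
      (hF.gcomm hω hG)]
    exact gad_gcomm hF.isHomog hG.isHomog X
  · calc (∀ X, gad n m c (h c M) X = 0) ↔ h c M = 0 :=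
          forall_gad_eq_zero_iff hnm (hD c M hM).isHomog (hD c M hM).str_eq_zero
      _ ↔ IsHamiltonianField ω c M 0 :=
          ⟨fun h0 => h0 ▸ hD c M hM, fun h0 => (hD_unique _ _ _ hM h0).symm⟩
      _ ↔ _ := IsHamiltonianField.zero_iff hω.linear_right
      _ ↔ ∃ k : ℂ, M = k • 1 := ⟨exists_eq_smul_one_of_forall_gad_eq_zero hM,
          by rintro ⟨k, rfl⟩ a E - -; exact gad_smul_one_right a E k⟩
  · obtain ⟨E, hE, hstr, hDE⟩ := hDer.exists_isHomog_gad hnm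
    obtain ⟨M, hM, rfl⟩ := exists_isHomog_eq_of_isHamiltonianField hnm hω.linear_right (h ε)
      (hD ε) (hD_unique ε) hE hstr
    exact ⟨M, hM, hDE⟩

/-- For a graded symplectic structure `ω` on `M(n|m)`, the map `M ↦ D_M` is a
Lie superalgebra homomorphism from `(M(n|m), {·,·}_ω)` to the graded
derivations, its kernel is `ℂ·1`, and every graded derivation of `M(n|m)` is
Hamiltonian. -/
theorem symplectic_hamiltonian_map (n m : ℕ) (hnm : n ≠ m)
    (ω : Bool → GMat n m → Bool → GMat n m → GMat n m)
    (hadd1 : ∀ (a : Bool) (E E' : GMat n m) (b : Bool) (F : GMat n m),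
      ω a (E + E') b F = ω a E b F + ω a E' b F)
    (hsmul1 : ∀ (k : ℂ) (a : Bool) (E : GMat n m) (b : Bool) (F : GMat n m),
      ω a (k • E) b F = k • ω a E b F)
    (hadd2 : ∀ (a : Bool) (E : GMat n m) (b : Bool) (F F' : GMat n m),
      ω a E b (F + F') = ω a E b F + ω a E b F')
    (hsmul2 : ∀ (k : ℂ) (a : Bool) (E : GMat n m) (b : Bool) (F : GMat n m),
      ω a E b (k • F) = k • ω a E b F)
    (halt : ∀ (a : Bool) (E : GMat n m) (b : Bool) (F : GMat n m),
      ω b F a E = -(GMat.sgn a b) • ω a E b F)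
    (heven : ∀ (a : Bool) (E : GMat n m) (b : Bool) (F : GMat n m),
      GMat.str n m E = 0 → GMat.str n m F = 0 →
      GMat.IsHomog n m a E → GMat.IsHomog n m b F →
      GMat.IsHomog n m (Bool.xor a b) (ω a E b F))
    (hclosed : ∀ (a b c : Bool) (E F G : GMat n m),
      GMat.str n m E = 0 → GMat.str n m F = 0 → GMat.str n m G = 0 →
      GMat.IsHomog n m a E → GMat.IsHomog n m b F → GMat.IsHomog n m c G →
      GMat.gad n m a E (ω b F c G) - GMat.sgn a b • GMat.gad n m b F (ω a E c G) +
        (GMat.sgn a c * GMat.sgn b c) • GMat.gad n m c G (ω a E b F) -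
        ω (Bool.xor a b) (GMat.gcomm a b E F) c G +
        GMat.sgn b c • ω (Bool.xor a c) (GMat.gcomm a c E G) b F +
        ω a E (Bool.xor b c) (GMat.gcomm b c F G) = 0)
    (h : Bool → GMat n m → GMat n m)
    (hHam : ∀ (c : Bool) (M : GMat n m), GMat.IsHomog n m c M →
      GMat.str n m (h c M) = 0 ∧ GMat.IsHomog n m c (h c M) ∧
      ∀ (a : Bool) (E : GMat n m), GMat.str n m E = 0 → GMat.IsHomog n m a E →
        ω a E c (h c M) = GMat.gad n m a E M)
    (hUniq : ∀ (c : Bool) (M : GMat n m), GMat.IsHomog n m c M →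
      ∀ N : GMat n m, GMat.str n m N = 0 → GMat.IsHomog n m c N →
        (∀ (a : Bool) (E : GMat n m), GMat.str n m E = 0 →
          GMat.IsHomog n m a E → ω a E c N = GMat.gad n m a E M) →
        N = h c M) :
    (∀ (c c' : Bool) (M M' : GMat n m), GMat.IsHomog n m c M →
      GMat.IsHomog n m c' M' → ∀ X : GMat n m,
      GMat.gad n m (Bool.xor c c')
          (h (Bool.xor c c') (ω c (h c M) c' (h c' M'))) X =
        GMat.gad n m c (h c M) (GMat.gad n m c' (h c' M') X) -
          GMat.sgn c c' • GMat.gad n m c' (h c' M') (GMat.gad n m c (h c M) X)) ∧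
    (∀ (c : Bool) (M : GMat n m), GMat.IsHomog n m c M →
      ((∀ X : GMat n m, GMat.gad n m c (h c M) X = 0) ↔
        ∃ k : ℂ, M = k • (1 : GMat n m))) ∧
    (∀ (ε : Bool) (D : GMat n m → GMat n m), GMat.IsGDer n m ε D →
      ∃ M : GMat n m, GMat.IsHomog n m ε M ∧
        ∀ X : GMat n m, D X = GMat.gad n m ε (h ε M) X) :=
  symplectic_hamiltonian_map_general n m hnm ω hadd2 hsmul2 halt heven hclosed h hHam hUniq
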